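/- The squared MMD between two Gaussian measures N(m, σ²I_p) and N(m', σ²I_p) under the Gaussian kernel k(y,y') = exp(−‖y−y'‖²/(2ℓ²)) equals 2(ℓ²/(ℓ² + 2σ²))^{p/2} (1 − exp(−‖m − m'‖²/(2(ℓ² + 2σ²)))); in particular it is zero if and only if m = m'. -/

import Mathlib

open MeasureTheory Real

lemma gauss_conv (A B : ℝ) (hA : 0 < A) (hB : 0 < B) (x c : ℝ) :
    ∫ u : ℝ, Real.exp (-(x - u) ^ 2 / (2 * A)) * Real.exp (-(u - c) ^ 2 / (2 * B))
      = Real.sqrt (2 * π * A * B / (A + B)) * Real.exp (-(x - c) ^ 2 / (2 * (A + B))) := by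
  have hAB : 0 < A + B := by linarith
  set k : ℝ := (A + B) / (2 * A * B) with hk
  have hkpos : 0 < k := by positivity
  set μ : ℝ := (B * x + A * c) / (A + B) with hμ
  have key : ∀ u : ℝ, Real.exp (-(x - u) ^ 2 / (2 * A)) * Real.exp (-(u - c) ^ 2 / (2 * B))
      = Real.exp (-(x - c) ^ 2 / (2 * (A + B))) * Real.exp (-(k * (u - μ) ^ 2)) := by
    intro u
    rw [← Real.exp_add, ← Real.exp_add]
    congr 1
    rw [hk, hμ]
    field_simp
    ring
  simp_rw [key]
  rw [integral_const_mul]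
  have : ∫ u : ℝ, Real.exp (-(k * (u - μ) ^ 2)) = ∫ u : ℝ, Real.exp (-(k * u ^ 2)) :=
    integral_sub_right_eq_self (fun u => Real.exp (-(k * u ^ 2))) μ
  rw [this]
  simp_rw [neg_mul_eq_neg_mul]
  rw [integral_gaussian k, mul_comm]
  congr 1
  rw [hk]
  congr 1
  field_simp

lemma one_dim (σ ℓ : ℝ) (hσ : 0 < σ) (hℓ : 0 < ℓ) (a b : ℝ) :
    ∫ y : ℝ, ∫ y' : ℝ, Real.exp (-(y - y') ^ 2 / (2 * ℓ ^ 2)) *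
        Real.exp (-(y - a) ^ 2 / (2 * σ ^ 2)) * Real.exp (-(y' - b) ^ 2 / (2 * σ ^ 2))
      = 2 * π * σ ^ 2 * Real.sqrt (ℓ ^ 2 / (ℓ ^ 2 + 2 * σ ^ 2)) *
        Real.exp (-(a - b) ^ 2 / (2 * (ℓ ^ 2 + 2 * σ ^ 2))) := by
  have hℓ2 : (0:ℝ) < ℓ ^ 2 := by positivity
  have hσ2 : (0:ℝ) < σ ^ 2 := by positivity
  have hs1 : (0:ℝ) < ℓ ^ 2 + σ ^ 2 := by positivity
  have inner : ∀ y : ℝ,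
      (∫ y' : ℝ, Real.exp (-(y - y') ^ 2 / (2 * ℓ ^ 2)) *
        Real.exp (-(y - a) ^ 2 / (2 * σ ^ 2)) * Real.exp (-(y' - b) ^ 2 / (2 * σ ^ 2)))
      = Real.exp (-(y - a) ^ 2 / (2 * σ ^ 2)) *
        (Real.sqrt (2 * π * ℓ ^ 2 * σ ^ 2 / (ℓ ^ 2 + σ ^ 2)) *
          Real.exp (-(y - b) ^ 2 / (2 * (ℓ ^ 2 + σ ^ 2)))) := by
    intro y
    rw [← gauss_conv (ℓ ^ 2) (σ ^ 2) hℓ2 hσ2 y b, ← integral_const_mul]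
    congr 1 with y'
    ring
  simp_rw [inner]
  have step2 : ∀ y : ℝ, Real.exp (-(y - a) ^ 2 / (2 * σ ^ 2)) *
      (Real.sqrt (2 * π * ℓ ^ 2 * σ ^ 2 / (ℓ ^ 2 + σ ^ 2)) *
        Real.exp (-(y - b) ^ 2 / (2 * (ℓ ^ 2 + σ ^ 2))))
      = Real.sqrt (2 * π * ℓ ^ 2 * σ ^ 2 / (ℓ ^ 2 + σ ^ 2)) *
        (Real.exp (-(a - y) ^ 2 / (2 * σ ^ 2)) *
          Real.exp (-(y - b) ^ 2 / (2 * (ℓ ^ 2 + σ ^ 2)))) := by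
    intro y
    rw [show (-(y - a) ^ 2 : ℝ) = -(a - y) ^ 2 by ring]
    ring
  simp_rw [step2]
  rw [integral_const_mul, gauss_conv (σ ^ 2) (ℓ ^ 2 + σ ^ 2) hσ2 hs1 a b]
  rw [← mul_assoc, ← Real.sqrt_mul (by positivity)]
  have h1 : 2 * π * ℓ ^ 2 * σ ^ 2 / (ℓ ^ 2 + σ ^ 2) *
      (2 * π * σ ^ 2 * (ℓ ^ 2 + σ ^ 2) / (σ ^ 2 + (ℓ ^ 2 + σ ^ 2)))
      = (2 * π * σ ^ 2) ^ 2 * (ℓ ^ 2 / (ℓ ^ 2 + 2 * σ ^ 2)) := by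
    field_simp
    ring
  rw [h1, Real.sqrt_mul (by positivity), Real.sqrt_sq (by positivity)]
  rw [show (σ ^ 2 + (ℓ ^ 2 + σ ^ 2) : ℝ) = ℓ ^ 2 + 2 * σ ^ 2 by ring]

lemma exp_norm_sq_prod {p : ℕ} (c : ℝ) (x : EuclideanSpace ℝ (Fin p)) :
    Real.exp (-‖x‖ ^ 2 / c) = ∏ i, Real.exp (-(x i) ^ 2 / c) := by
  rw [← Real.exp_sum]
  congr 1
  have : ‖x‖ ^ 2 = ∑ i, (x i) ^ 2 := by
    rw [EuclideanSpace.norm_eq, Real.sq_sqrt (Finset.sum_nonneg fun i _ => by positivity)]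
    simp [sq_abs]
  rw [this, neg_div, Finset.sum_div, ← Finset.sum_neg_distrib]
  simp [neg_div]

lemma euclid_integral_prod {p : ℕ} (g : Fin p → ℝ → ℝ) :
    (∫ y : EuclideanSpace ℝ (Fin p), ∏ i, g i (y i)) = ∏ i, ∫ t : ℝ, g i t := by
  have h := (EuclideanSpace.volume_preserving_symm_measurableEquiv_toLp (Fin p)).symm
  rw [← h.integral_comp (MeasurableEquiv.measurableEmbedding _)]
  simp only [MeasurableEquiv.symm_symm, MeasurableEquiv.coe_toLp, PiLp.toLp_apply]
  exact integral_fintype_prod_eq_prod g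

lemma D_eq (p : ℕ) (σ ℓ : ℝ) (hσ : 0 < σ) (hℓ : 0 < ℓ)
    (a b : EuclideanSpace ℝ (Fin p)) :
    (∫ y : EuclideanSpace ℝ (Fin p), ∫ y' : EuclideanSpace ℝ (Fin p),
        Real.exp (-‖y - y'‖ ^ 2 / (2 * ℓ ^ 2)) *
          ((2 * π * σ ^ 2) ^ (-(p : ℝ) / 2) * Real.exp (-‖y - a‖ ^ 2 / (2 * σ ^ 2))) *
          ((2 * π * σ ^ 2) ^ (-(p : ℝ) / 2) * Real.exp (-‖y' - b‖ ^ 2 / (2 * σ ^ 2))))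
      = (ℓ ^ 2 / (ℓ ^ 2 + 2 * σ ^ 2)) ^ ((p : ℝ) / 2) *
          Real.exp (-‖a - b‖ ^ 2 / (2 * (ℓ ^ 2 + 2 * σ ^ 2))) := by
  have hπ : (0:ℝ) < π := Real.pi_pos
  have hc : (0:ℝ) < 2 * π * σ ^ 2 := by positivity
  set C : ℝ := (2 * π * σ ^ 2) ^ (-(p : ℝ) / 2) with hC
  set g : Fin p → ℝ → ℝ → ℝ := fun i s t =>
    Real.exp (-(s - t) ^ 2 / (2 * ℓ ^ 2)) * Real.exp (-(s - a i) ^ 2 / (2 * σ ^ 2)) *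
      Real.exp (-(t - b i) ^ 2 / (2 * σ ^ 2)) with hg
  have hsplit : ∀ y y' : EuclideanSpace ℝ (Fin p),
      Real.exp (-‖y - y'‖ ^ 2 / (2 * ℓ ^ 2)) *
        (C * Real.exp (-‖y - a‖ ^ 2 / (2 * σ ^ 2))) *
        (C * Real.exp (-‖y' - b‖ ^ 2 / (2 * σ ^ 2)))
      = (C * C) * ∏ i, g i (y i) (y' i) := by
    intro y y'
    have e1 := exp_norm_sq_prod (2 * ℓ ^ 2) (y - y')
    have e2 := exp_norm_sq_prod (2 * σ ^ 2) (y - a)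
    have e3 := exp_norm_sq_prod (2 * σ ^ 2) (y' - b)
    simp only [PiLp.sub_apply] at e1 e2 e3
    rw [show Real.exp (-‖y - y'‖ ^ 2 / (2 * ℓ ^ 2)) *
        (C * Real.exp (-‖y - a‖ ^ 2 / (2 * σ ^ 2))) *
        (C * Real.exp (-‖y' - b‖ ^ 2 / (2 * σ ^ 2)))
      = (C * C) * (Real.exp (-‖y - y'‖ ^ 2 / (2 * ℓ ^ 2)) *
          Real.exp (-‖y - a‖ ^ 2 / (2 * σ ^ 2)) * Real.exp (-‖y' - b‖ ^ 2 / (2 * σ ^ 2)))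
        by ring]
    rw [e1, e2, e3, ← Finset.prod_mul_distrib, ← Finset.prod_mul_distrib]
  simp_rw [hsplit, integral_const_mul]
  have hin : ∀ y : EuclideanSpace ℝ (Fin p),
      (∫ y' : EuclideanSpace ℝ (Fin p), ∏ i, g i (y i) (y' i))
        = ∏ i, ∫ t : ℝ, g i (y i) t :=
    fun y => euclid_integral_prod (fun i t => g i (y i) t)
  simp_rw [hin]
  rw [euclid_integral_prod (fun i s => ∫ t : ℝ, g i s t)]
  have hone : ∀ i, (∫ s : ℝ, ∫ t : ℝ, g i s t)
      = 2 * π * σ ^ 2 * Real.sqrt (ℓ ^ 2 / (ℓ ^ 2 + 2 * σ ^ 2)) *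
        Real.exp (-(a i - b i) ^ 2 / (2 * (ℓ ^ 2 + 2 * σ ^ 2))) :=
    fun i => one_dim σ ℓ hσ hℓ (a i) (b i)
  rw [Finset.prod_congr rfl fun i _ => hone i, Finset.prod_mul_distrib, Finset.prod_const,
    Finset.card_univ, Fintype.card_fin]
  have habk : ∏ i, Real.exp (-(a i - b i) ^ 2 / (2 * (ℓ ^ 2 + 2 * σ ^ 2)))
      = Real.exp (-‖a - b‖ ^ 2 / (2 * (ℓ ^ 2 + 2 * σ ^ 2))) := by
    have := exp_norm_sq_prod (2 * (ℓ ^ 2 + 2 * σ ^ 2)) (a - b)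
    simp only [PiLp.sub_apply] at this
    rw [this]
  rw [habk, ← mul_assoc]
  congr 1
  -- constants
  rw [mul_pow, ← mul_assoc]
  have h1 : C * C * (2 * π * σ ^ 2) ^ p = 1 := by
    rw [hC, ← Real.rpow_natCast (2 * π * σ ^ 2) p, ← Real.rpow_add hc, ← Real.rpow_add hc]
    rw [show (-(p : ℝ) / 2 + -(p : ℝ) / 2 + (p : ℝ)) = 0 by ring, Real.rpow_zero]
  rw [h1, one_mul]
  rw [← Real.rpow_natCast (Real.sqrt _) p, Real.sqrt_eq_rpow,
    ← Real.rpow_mul (by positivity)]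
  congr 1
  ring

/-- The squared MMD between two Gaussians `N(m, σ²I_p)` and `N(m', σ²I_p)` under the
Gaussian kernel `k(y,y') = exp(−‖y−y'‖²/(2ℓ²))`, computed via
`MMD² = ∬k dP dP − 2∬k dP dP' + ∬k dP' dP'` with the Gaussian Lebesgue densities,
equals `2(ℓ²/(ℓ²+2σ²))^{p/2}(1 − exp(−‖m−m'‖²/(2(ℓ²+2σ²))))`; in particular it is
zero if and only if `m = m'`. -/
theorem gaussian_mmd_sq
    (p : ℕ) (σ ℓ : ℝ) (hσ : 0 < σ) (hℓ : 0 < ℓ)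
    (m m' : EuclideanSpace ℝ (Fin p))
    (D : EuclideanSpace ℝ (Fin p) → EuclideanSpace ℝ (Fin p) → ℝ)
    (hD : ∀ a b : EuclideanSpace ℝ (Fin p),
      D a b = ∫ y : EuclideanSpace ℝ (Fin p), ∫ y' : EuclideanSpace ℝ (Fin p),
        Real.exp (-‖y - y'‖ ^ 2 / (2 * ℓ ^ 2)) *
          ((2 * π * σ ^ 2) ^ (-(p : ℝ) / 2) * Real.exp (-‖y - a‖ ^ 2 / (2 * σ ^ 2))) *
          ((2 * π * σ ^ 2) ^ (-(p : ℝ) / 2) * Real.exp (-‖y' - b‖ ^ 2 / (2 * σ ^ 2)))) :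
    D m m - 2 * D m m' + D m' m'
        = 2 * (ℓ ^ 2 / (ℓ ^ 2 + 2 * σ ^ 2)) ^ ((p : ℝ) / 2)
            * (1 - Real.exp (-‖m - m'‖ ^ 2 / (2 * (ℓ ^ 2 + 2 * σ ^ 2)))) ∧
      (D m m - 2 * D m m' + D m' m' = 0 ↔ m = m') := by
  have hs : (0:ℝ) < ℓ ^ 2 + 2 * σ ^ 2 := by positivity
  set K : ℝ := (ℓ ^ 2 / (ℓ ^ 2 + 2 * σ ^ 2)) ^ ((p : ℝ) / 2) with hK
  have hKpos : 0 < K := Real.rpow_pos_of_pos (by positivity) _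
  set e : ℝ := Real.exp (-‖m - m'‖ ^ 2 / (2 * (ℓ ^ 2 + 2 * σ ^ 2))) with he
  have hDmm : D m m = K := by
    rw [hD, D_eq p σ ℓ hσ hℓ m m]
    simp [hK]
  have hDm'm' : D m' m' = K := by
    rw [hD, D_eq p σ ℓ hσ hℓ m' m']
    simp [hK]
  have hDmm' : D m m' = K * e := by
    rw [hD, D_eq p σ ℓ hσ hℓ m m']
  have hmain : D m m - 2 * D m m' + D m' m' = 2 * K * (1 - e) := by
    rw [hDmm, hDm'm', hDmm']; ring
  refine ⟨hmain, ?_⟩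
  rw [hmain]
  constructor
  · intro h
    have h1 : 1 - e = 0 := by
      rcases mul_eq_zero.1 h with h' | h'
      · exact absurd h' (by positivity)
      · exact h'
    have h2 : e = 1 := by linarith
    rw [he, Real.exp_eq_one_iff] at h2
    have h3 : ‖m - m'‖ ^ 2 = 0 := by
      have := (div_eq_zero_iff.1 h2).resolve_right (by positivity)
      linarith [neg_eq_zero.1 this]
    have := pow_eq_zero_iff (two_ne_zero) |>.1 h3
    rw [norm_eq_zero, sub_eq_zero] at this
    exact this
  · intro h
    subst h
    simp [he]
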